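/- Let V be a 7-dimensional real inner product space endowed with a 2-fold vector cross product χ, and let G be the group of linear isometries γ of V satisfying γ(χ(x,y)) = χ(γx,γy) for all x,y ∈ V (the stabilizer of χ, a copy of the exceptional group G₂). If R is an algebraic curvature operator on V that is G-invariant, i.e., R(γx,γy) = γ ∘ R(x,y) ∘ γ⁻¹ for all γ ∈ G and all x,y ∈ V, then R is a real scalar multiple of R^Id. In other words, the space of G₂-invariant algebraic curvature operators on V has dimension 1. -/

import Mathlib

/-!
The stabilizer `G₂` of `χ` acts transitively on orthonormal pairs. An orthonormal pair `(a, b)`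
extends to a special triple `(a, b, d)` (orthonormal, with `d ⟂ a × b`), and its Cayley frame
`(a, b, a × b, d, a × d, b × d, (a × b) × d)` is an orthonormal basis on which `×` has a fixed
multiplication table, derived from the identity `x × (x × y) = ⟪x, y⟫ x - ⟪x, x⟫ y`. The isometry
carrying one Cayley frame to another therefore preserves `χ`.

Consequently a `G₂`-invariant `R` has the same sectional curvature `c` on every plane, and
`R - c • R^Id` is an algebraic curvature operator with vanishing sectional curvature, hence zero.
-/

open RealInnerProductSpace

variable {V : Type*} [NormedAddCommGroup V] [InnerProductSpace ℝ V]

/-- An `r`-fold vector cross product on a real inner product space: an alternating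
multilinear map `χ` whose value is orthogonal to each of its arguments and whose
squared norm is the Gram determinant of the arguments. -/
def IsVCP {r : ℕ} (χ : AlternatingMap ℝ V V (Fin r)) : Prop :=
  (∀ v : Fin r → V, ∀ i : Fin r, ⟪χ v, v i⟫ = 0) ∧
  (∀ v : Fin r → V, ⟪χ v, χ v⟫ = (Matrix.of fun i j : Fin r => ⟪v i, v j⟫).det)

/-- An algebraic curvature operator: a bilinear map `V × V → End(V)` that is
antisymmetric, takes skew-adjoint values, and satisfies the first Bianchi identity. -/
def IsAlgCurvature (R : V →ₗ[ℝ] V →ₗ[ℝ] V →ₗ[ℝ] V) : Prop :=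
  (∀ x y, R x y = - R y x) ∧
  (∀ x y z w, ⟪R x y z, w⟫ = - ⟪R x y w, z⟫) ∧
  (∀ x y z, R x y z + R y z x + R z x y = 0)

/-- Orthogonal projection onto the orthogonal complement of the span of `S`. -/
noncomputable def projPerp [FiniteDimensional ℝ V] (S : Set V) (z : V) : V :=
  (Submodule.orthogonalProjectionOnto (Submodule.span ℝ S)ᗮ z : V)

/-- The constant-curvature operator `R^Id(x,y)z = ⟪y,z⟫ • x - ⟪x,z⟫ • y`. -/
noncomputable def RId : V →ₗ[ℝ] V →ₗ[ℝ] V →ₗ[ℝ] V :=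
  LinearMap.mk₂ ℝ
    (fun x y =>
      { toFun := fun z => ⟪y, z⟫ • x - ⟪x, z⟫ • y
        map_add' := fun a b => by simp only [inner_add_right, add_smul]; abel
        map_smul' := fun c a => by
          simp only [inner_smul_right, RingHom.id_apply, smul_sub, smul_smul] })
    (fun x x' y => by ext z; simp [inner_add_left, add_smul]; abel)
    (fun c x y => by ext z; simp [real_inner_smul_left, smul_sub, smul_smul, mul_comm])
    (fun x y y' => by ext z; simp [inner_add_left, add_smul]; abel)
    (fun c x y => by ext z; simp [real_inner_smul_left, smul_sub, smul_smul, mul_comm])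

/-- The first CR-integrability condition for an algebraic curvature operator `R`
with respect to an `(m+2)`-fold VCP `χ`: for every orthonormal `(m+2)`-tuple
`w = (w₁, …, w_r)` and every `z` orthogonal to `w₂, …, w_r`, the orthogonal
projection `P` onto `span{w₂,…,w_r}ᗮ` satisfies
`P (R(w₁,w₂) (χ(w₂,…,w_r,z))) = χ(w₂,…,w_r, P (R(w₁,w₂) z))`. -/
def FirstCR [FiniteDimensional ℝ V] {m : ℕ} (χ : AlternatingMap ℝ V V (Fin (m + 2)))
    (R : V →ₗ[ℝ] V →ₗ[ℝ] V →ₗ[ℝ] V) : Prop :=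
  ∀ w : Fin (m + 2) → V, Orthonormal ℝ w → ∀ z : V,
    (∀ i : Fin (m + 1), ⟪z, Fin.tail w i⟫ = 0) →
    projPerp (Set.range (Fin.tail w)) (R (w 0) (w 1) (χ (Fin.snoc (Fin.tail w) z))) =
      χ (Fin.snoc (Fin.tail w) (projPerp (Set.range (Fin.tail w)) (R (w 0) (w 1) z)))


namespace AlternatingMap

noncomputable def cross (χ : AlternatingMap ℝ V V (Fin 2)) : V →ₗ[ℝ] V →ₗ[ℝ] V :=
  LinearMap.mk₂ ℝ (fun x y => χ ![x, y])
    (fun x x' y => by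
      convert χ.map_update_add ![x, y] 0 x x' using 3 <;> funext i <;> fin_cases i <;> rfl)
    (fun c x y => by
      convert χ.map_update_smul ![x, y] 0 c x using 3 <;> funext i <;> fin_cases i <;> rfl)
    (fun x y y' => by
      convert χ.map_update_add ![x, y] 1 y y' using 3 <;> funext i <;> fin_cases i <;> rfl)
    (fun c x y => by
      convert χ.map_update_smul ![x, y] 1 c y using 3 <;> funext i <;> fin_cases i <;> rfl)

variable (χ : AlternatingMap ℝ V V (Fin 2))

theorem cross_apply (x y : V) : χ.cross x y = χ ![x, y] := rfl

theorem cross_self (x : V) : χ.cross x x = 0 :=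
  χ.map_eq_zero_of_eq ![x, x] (i := 0) (j := 1) rfl (by decide)

theorem cross_anticomm (x y : V) : χ.cross x y = -χ.cross y x := by
  rw [eq_neg_iff_add_eq_zero]
  simpa [cross_self] using χ.cross_self (x + y)

end AlternatingMap

structure IsSpecialTriple (χ : AlternatingMap ℝ V V (Fin 2)) (a b d : V) : Prop where
  inner_self_a : ⟪a, a⟫ = 1
  inner_self_b : ⟪b, b⟫ = 1
  inner_self_d : ⟪d, d⟫ = 1
  inner_a_b : ⟪a, b⟫ = 0
  inner_a_d : ⟪a, d⟫ = 0
  inner_b_d : ⟪b, d⟫ = 0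
  inner_cross_d : ⟪χ.cross a b, d⟫ = 0

noncomputable def cayleyFrame (χ : AlternatingMap ℝ V V (Fin 2)) (a b d : V) : Fin 7 → V :=
  ![a, b, χ.cross a b, d, χ.cross a d, χ.cross b d, χ.cross (χ.cross a b) d]

/-- The multiplication table of a Cayley frame `e`:
`e i × e j = crossSign i j • e (crossIndex i j)`. On the diagonal `crossSign i i = 0`, and
`crossIndex i i = 0` is a junk value. -/
def crossIndex : Fin 7 → Fin 7 → Fin 7 :=
  ![![0, 2, 1, 4, 3, 6, 5], ![2, 0, 0, 5, 6, 3, 4], ![1, 0, 0, 6, 5, 4, 3],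
    ![4, 5, 6, 0, 0, 1, 2], ![3, 6, 5, 0, 0, 2, 1], ![6, 3, 4, 1, 2, 0, 0],
    ![5, 4, 3, 2, 1, 0, 0]]

def crossSign : Fin 7 → Fin 7 → ℤ :=
  ![![0, 1, -1, 1, -1, -1, 1], ![-1, 0, 1, 1, 1, -1, -1], ![1, -1, 0, 1, -1, 1, -1],
    ![-1, -1, -1, 0, 1, 1, 1], ![1, -1, 1, -1, 0, -1, 1], ![1, 1, -1, -1, 1, 0, -1],
    ![-1, 1, 1, -1, -1, 1, 0]]

theorem crossSign_self (i : Fin 7) : crossSign i i = 0 := by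
  revert i; decide

theorem crossSign_swap (i j : Fin 7) : crossSign j i = -crossSign i j := by
  revert i j; decide

theorem crossIndex_swap (i j : Fin 7) : crossIndex j i = crossIndex i j := by
  revert i j; decide

theorem crossIndex_crossIndex {i j : Fin 7} (hij : i ≠ j) : crossIndex i (crossIndex i j) = j := by
  revert i j; decide

theorem crossSign_crossIndex_ne_zero {i j : Fin 7} (hij : i ≠ j) :
    crossSign i (crossIndex i j) ≠ 0 := by
  revert i j; decide

section Cross

variable {χ : AlternatingMap ℝ V V (Fin 2)}

local notation x " ×ᵪ " y => AlternatingMap.cross χ x y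

namespace IsVCP

variable (hχ : IsVCP χ)
include hχ

theorem inner_cross_left (x y : V) : ⟪x ×ᵪ y, x⟫ = 0 :=
  hχ.1 ![x, y] 0

theorem inner_cross_right (x y : V) : ⟪x ×ᵪ y, y⟫ = 0 :=
  hχ.1 ![x, y] 1

theorem inner_cross_swap (x y z : V) : ⟪x ×ᵪ y, z⟫ = -⟪x ×ᵪ z, y⟫ := by
  have h := hχ.inner_cross_right x (y + z)
  simp only [map_add, inner_add_left, inner_add_right, hχ.inner_cross_right] at h
  linarith

theorem inner_cross_assoc (x y z : V) : ⟪x, y ×ᵪ z⟫ = ⟪x ×ᵪ y, z⟫ := by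
  rw [real_inner_comm, hχ.inner_cross_swap, χ.cross_anticomm y, inner_neg_left, neg_neg]

theorem inner_cross_self (x y : V) :
    ⟪x ×ᵪ y, x ×ᵪ y⟫ = ⟪x, x⟫ * ⟪y, y⟫ - ⟪x, y⟫ * ⟪x, y⟫ := by
  rw [AlternatingMap.cross_apply, hχ.2, Matrix.det_fin_two]
  simp [real_inner_comm x y]

theorem inner_cross_cross_left (x y z : V) :
    ⟪x ×ᵪ y, x ×ᵪ z⟫ = ⟪x, x⟫ * ⟪y, z⟫ - ⟪x, y⟫ * ⟪x, z⟫ := by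
  have h := hχ.inner_cross_self x (y + z)
  simp only [map_add, inner_add_left, inner_add_right, hχ.inner_cross_self] at h
  rw [real_inner_comm (x ×ᵪ y), real_inner_comm y z] at h
  linarith

theorem cross_cross_self_left (x y : V) : (x ×ᵪ (x ×ᵪ y)) = ⟪x, y⟫ • x - ⟪x, x⟫ • y := by
  refine ext_inner_right ℝ fun w => ?_
  rw [hχ.inner_cross_swap, real_inner_comm, hχ.inner_cross_cross_left]
  simp only [inner_sub_left, real_inner_smul_left]
  ring

theorem cross_cross_add_cross_cross (x y z : V) :
    (x ×ᵪ (z ×ᵪ y)) + (z ×ᵪ (x ×ᵪ y)) = ⟪x, y⟫ • z + ⟪z, y⟫ • x - (2 * ⟪x, z⟫) • y := by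
  have h := hχ.cross_cross_self_left (x + z) y
  simp only [map_add, LinearMap.add_apply, inner_add_left, inner_add_right,
    hχ.cross_cross_self_left, real_inner_comm x z] at h
  linear_combination (norm := module) h

theorem cross_cross_self_left_of_orthonormal {x y : V} (hx : ⟪x, x⟫ = 1) (hxy : ⟪x, y⟫ = 0) :
    (x ×ᵪ (x ×ᵪ y)) = -y := by
  rw [hχ.cross_cross_self_left, hx, hxy]
  module

theorem cross_cross_self_right_of_orthonormal {x y : V} (hy : ⟪y, y⟫ = 1) (hxy : ⟪x, y⟫ = 0) :
    ((x ×ᵪ y) ×ᵪ y) = -x := by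
  rw [χ.cross_anticomm _ y, χ.cross_anticomm x, map_neg, neg_neg,
    hχ.cross_cross_self_left_of_orthonormal hy (by rwa [real_inner_comm])]

theorem cross_cross_anticomm_of_orthogonal {x y z : V} (hxy : ⟪x, y⟫ = 0) (hzy : ⟪z, y⟫ = 0)
    (hxz : ⟪x, z⟫ = 0) : (x ×ᵪ (z ×ᵪ y)) = -(z ×ᵪ (x ×ᵪ y)) := by
  have h := hχ.cross_cross_add_cross_cross x y z
  rw [hxy, hzy, hxz] at h
  linear_combination (norm := module) h

theorem cross_cross_assoc_of_orthogonal {x y z : V} (hxy : ⟪x, y⟫ = 0) (hyz : ⟪y, z⟫ = 0)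
    (hxz : ⟪x, z⟫ = 0) : ((x ×ᵪ y) ×ᵪ z) = -(x ×ᵪ (y ×ᵪ z)) := by
  rw [χ.cross_anticomm _ z, hχ.cross_cross_anticomm_of_orthogonal (by rwa [real_inner_comm]) hxy
    (by rwa [real_inner_comm]), neg_neg, χ.cross_anticomm z y, map_neg]

end IsVCP

namespace IsSpecialTriple

variable (hχ : IsVCP χ) {a b d : V} (H : IsSpecialTriple χ a b d)
include hχ H

theorem inner_self_cross_a_b : ⟪a ×ᵪ b, a ×ᵪ b⟫ = 1 := by
  rw [hχ.inner_cross_self, H.inner_self_a, H.inner_self_b, H.inner_a_b]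
  ring

theorem inner_a_cross_b_d : ⟪a, b ×ᵪ d⟫ = 0 := by
  rw [hχ.inner_cross_assoc, H.inner_cross_d]

theorem inner_b_cross_a_d : ⟪b, a ×ᵪ d⟫ = 0 := by
  rw [hχ.inner_cross_assoc, χ.cross_anticomm, inner_neg_left, H.inner_cross_d, neg_zero]

theorem inner_cross_a_d_cross_a_b : ⟪a ×ᵪ d, a ×ᵪ b⟫ = 0 := by
  rw [hχ.inner_cross_cross_left, H.inner_a_d, H.inner_a_b, real_inner_comm b, H.inner_b_d]
  ring

theorem inner_cross_b_d_cross_a_b : ⟪b ×ᵪ d, a ×ᵪ b⟫ = 0 := by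
  rw [χ.cross_anticomm a, inner_neg_right, hχ.inner_cross_cross_left, H.inner_b_d,
    real_inner_comm a, H.inner_a_d]
  ring

theorem cross_a_cross_b_d : (a ×ᵪ (b ×ᵪ d)) = -((a ×ᵪ b) ×ᵪ d) := by
  rw [hχ.cross_cross_assoc_of_orthogonal H.inner_a_b H.inner_b_d H.inner_a_d, neg_neg]

theorem cross_b_cross_a_d : (b ×ᵪ (a ×ᵪ d)) = ((a ×ᵪ b) ×ᵪ d) := by
  rw [hχ.cross_cross_anticomm_of_orthogonal H.inner_b_d H.inner_a_d
    (by rw [real_inner_comm, H.inner_a_b]), H.cross_a_cross_b_d hχ, neg_neg]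

theorem cross_a_cross_cross_a_b_d : (a ×ᵪ ((a ×ᵪ b) ×ᵪ d)) = (b ×ᵪ d) := by
  rw [← neg_neg ((a ×ᵪ b) ×ᵪ d), ← H.cross_a_cross_b_d hχ, map_neg,
    hχ.cross_cross_self_left_of_orthonormal H.inner_self_a (H.inner_a_cross_b_d hχ), neg_neg]

theorem cross_b_cross_cross_a_b_d : (b ×ᵪ ((a ×ᵪ b) ×ᵪ d)) = -(a ×ᵪ d) := by
  rw [← H.cross_b_cross_a_d hχ,
    hχ.cross_cross_self_left_of_orthonormal H.inner_self_b (H.inner_b_cross_a_d hχ)]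

theorem cross_cayleyFrame_of_lt {i j : Fin 7} (hij : i < j) :
    (cayleyFrame χ a b d i ×ᵪ cayleyFrame χ a b d j) =
      crossSign i j • cayleyFrame χ a b d (crossIndex i j) := by
  fin_cases i <;> fin_cases j <;>
    simp only [Fin.zero_eta, Fin.mk_one, Fin.reduceFinMk, Fin.isValue, Fin.reduceLT] at hij ⊢ <;>
    simp only [cayleyFrame, crossSign, crossIndex, Fin.isValue, Matrix.cons_val,
      Matrix.cons_val_zero, Matrix.cons_val_one, one_smul, neg_smul]
  · exact hχ.cross_cross_self_left_of_orthonormal H.inner_self_a H.inner_a_b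
  · exact hχ.cross_cross_self_left_of_orthonormal H.inner_self_a H.inner_a_d
  · exact H.cross_a_cross_b_d hχ
  · exact H.cross_a_cross_cross_a_b_d hχ
  · rw [χ.cross_anticomm, hχ.cross_cross_self_right_of_orthonormal H.inner_self_b H.inner_a_b,
      neg_neg]
  · exact H.cross_b_cross_a_d hχ
  · exact hχ.cross_cross_self_left_of_orthonormal H.inner_self_b H.inner_b_d
  · exact H.cross_b_cross_cross_a_b_d hχ
  · rw [hχ.cross_cross_anticomm_of_orthogonal H.inner_cross_d H.inner_a_d
      (hχ.inner_cross_left a b), H.cross_a_cross_cross_a_b_d hχ]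
  · rw [hχ.cross_cross_anticomm_of_orthogonal H.inner_cross_d H.inner_b_d
      (hχ.inner_cross_right a b), H.cross_b_cross_cross_a_b_d hχ, neg_neg]
  · exact hχ.cross_cross_self_left_of_orthonormal (H.inner_self_cross_a_b hχ) H.inner_cross_d
  · rw [χ.cross_anticomm, hχ.cross_cross_self_right_of_orthonormal H.inner_self_d H.inner_a_d,
      neg_neg]
  · rw [χ.cross_anticomm, hχ.cross_cross_self_right_of_orthonormal H.inner_self_d H.inner_b_d,
      neg_neg]
  · rw [χ.cross_anticomm, hχ.cross_cross_self_right_of_orthonormal H.inner_self_d H.inner_cross_d,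
      neg_neg]
  · rw [hχ.cross_cross_anticomm_of_orthogonal (hχ.inner_cross_right a d) H.inner_b_d
      (by rw [real_inner_comm, H.inner_b_cross_a_d hχ]),
      hχ.cross_cross_self_right_of_orthonormal H.inner_self_d H.inner_a_d, map_neg, neg_neg,
      χ.cross_anticomm b]
  · rw [hχ.cross_cross_anticomm_of_orthogonal (hχ.inner_cross_right a d) H.inner_cross_d
      (H.inner_cross_a_d_cross_a_b hχ),
      hχ.cross_cross_self_right_of_orthonormal H.inner_self_d H.inner_a_d, map_neg, neg_neg,
      χ.cross_anticomm _ a, hχ.cross_cross_self_left_of_orthonormal H.inner_self_a H.inner_a_b,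
      neg_neg]
  · rw [hχ.cross_cross_anticomm_of_orthogonal (hχ.inner_cross_right b d) H.inner_cross_d
      (H.inner_cross_b_d_cross_a_b hχ),
      hχ.cross_cross_self_right_of_orthonormal H.inner_self_d H.inner_b_d, map_neg, neg_neg,
      hχ.cross_cross_self_right_of_orthonormal H.inner_self_b H.inner_a_b]

theorem cross_cayleyFrame (i j : Fin 7) :
    (cayleyFrame χ a b d i ×ᵪ cayleyFrame χ a b d j) =
      crossSign i j • cayleyFrame χ a b d (crossIndex i j) := by
  rcases lt_trichotomy i j with hij | rfl | hij
  · exact H.cross_cayleyFrame_of_lt hχ hij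
  · rw [χ.cross_self, crossSign_self, zero_smul]
  · rw [χ.cross_anticomm, H.cross_cayleyFrame_of_lt hχ hij, crossSign_swap, crossIndex_swap,
      neg_smul, neg_neg]

theorem orthonormal_cayleyFrame : Orthonormal ℝ (cayleyFrame χ a b d) := by
  rw [orthonormal_iff_ite]
  intro i k
  split_ifs with hik
  · subst hik
    fin_cases i <;>
      simp only [cayleyFrame, Fin.zero_eta, Fin.mk_one, Fin.reduceFinMk, Fin.isValue,
        Matrix.cons_val, Matrix.cons_val_zero, Matrix.cons_val_one, hχ.inner_cross_self,
        H.inner_self_a, H.inner_self_b, H.inner_self_d, H.inner_a_b, H.inner_a_d, H.inner_b_d,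
        H.inner_cross_d] <;>
      norm_num
  -- `e i × e j = ± e k` for `j = crossIndex i k`, and `e i × e j ⟂ e i`.
  · have h := congrArg (⟪·, cayleyFrame χ a b d i⟫) (H.cross_cayleyFrame hχ i (crossIndex i k))
    rw [crossIndex_crossIndex hik, hχ.inner_cross_left, ← Int.cast_smul_eq_zsmul ℝ,
      real_inner_smul_left, eq_comm, mul_eq_zero] at h
    rw [real_inner_comm]
    exact h.resolve_left (by exact_mod_cast crossSign_crossIndex_ne_zero hik)

noncomputable def cayleyBasis (h7 : Module.finrank ℝ V = 7) : OrthonormalBasis (Fin 7) ℝ V :=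
  OrthonormalBasis.mk (H.orthonormal_cayleyFrame hχ)
    ((H.orthonormal_cayleyFrame hχ).linearIndependent.span_eq_top_of_card_eq_finrank
      (by simp [h7])).ge

theorem coe_cayleyBasis (h7 : Module.finrank ℝ V = 7) :
    ⇑(H.cayleyBasis hχ h7) = cayleyFrame χ a b d :=
  OrthonormalBasis.coe_mk _ _

end IsSpecialTriple

end Cross

theorem exists_isSpecialTriple [FiniteDimensional ℝ V] (χ : AlternatingMap ℝ V V (Fin 2))
    (hV : 3 < Module.finrank ℝ V) {a b : V} (ha : ⟪a, a⟫ = 1) (hb : ⟪b, b⟫ = 1)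
    (hab : ⟪a, b⟫ = 0) : ∃ d, IsSpecialTriple χ a b d := by
  set W := Submodule.span ℝ (Set.range ![a, b, χ.cross a b])
  have hW : Module.finrank ℝ W ≤ 3 := finrank_range_le_card (R := ℝ) _
  have hW' : 0 < Module.finrank ℝ Wᗮ := by
    have := W.finrank_add_finrank_orthogonal
    omega
  have := Module.finrank_pos_iff.1 hW'
  obtain ⟨⟨d, hdW⟩, hd : ‖d‖ = 1⟩ := exists_norm_eq Wᗮ zero_le_one
  have hd_orth (i : Fin 3) : ⟪![a, b, χ.cross a b] i, d⟫ = 0 :=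
    (Submodule.mem_orthogonal W d).1 hdW _ (Submodule.subset_span ⟨i, rfl⟩)
  refine ⟨d, ha, hb, ?_, hab, hd_orth 0, hd_orth 1, hd_orth 2⟩
  rw [real_inner_self_eq_norm_sq, hd, one_pow]

theorem IsVCP.exists_linearIsometryEquiv_map_orthonormal_pair [FiniteDimensional ℝ V]
    {χ : AlternatingMap ℝ V V (Fin 2)} (hχ : IsVCP χ) (h7 : Module.finrank ℝ V = 7)
    {a b a' b' : V} (ha : ⟪a, a⟫ = 1) (hb : ⟪b, b⟫ = 1) (hab : ⟪a, b⟫ = 0)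
    (ha' : ⟪a', a'⟫ = 1) (hb' : ⟪b', b'⟫ = 1) (hab' : ⟪a', b'⟫ = 0) :
    ∃ γ : V ≃ₗᵢ[ℝ] V, (∀ x y, γ (χ ![x, y]) = χ ![γ x, γ y]) ∧ γ a = a' ∧ γ b = b' := by
  obtain ⟨d, H⟩ := exists_isSpecialTriple χ (by omega) ha hb hab
  obtain ⟨d', H'⟩ := exists_isSpecialTriple χ (by omega) ha' hb' hab'
  set e := H.cayleyBasis hχ h7
  set γ := e.equiv (H'.cayleyBasis hχ h7) (Equiv.refl _)
  have hγ (i : Fin 7) : γ (cayleyFrame χ a b d i) = cayleyFrame χ a' b' d' i := by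
    simpa [e, H.coe_cayleyBasis, H'.coe_cayleyBasis] using
      e.equiv_apply_basis (H'.cayleyBasis hχ h7) (Equiv.refl _) i
  have hcross :
      χ.cross.compr₂ γ.toLinearMap = (χ.cross.comp γ.toLinearMap).compl₂ γ.toLinearMap := by
    refine LinearMap.ext_basis e.toBasis e.toBasis fun i j => ?_
    simp only [OrthonormalBasis.coe_toBasis, e, H.coe_cayleyBasis, LinearMap.compr₂_apply,
      LinearMap.compl₂_apply, LinearMap.comp_apply]
    change γ _ = χ.cross (γ _) (γ _)
    rw [H.cross_cayleyFrame hχ, map_zsmul, hγ, hγ, hγ, H'.cross_cayleyFrame hχ]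
  exact ⟨γ, LinearMap.congr_fun₂ hcross, hγ 0, hγ 1⟩

theorem RId_apply (x y z : V) : RId x y z = ⟪y, z⟫ • x - ⟪x, z⟫ • y := rfl

theorem isAlgCurvature_RId : IsAlgCurvature (RId (V := V)) := by
  refine ⟨fun x y => ?_, fun x y z w => ?_, fun x y z => ?_⟩
  · ext z
    simp only [RId_apply, LinearMap.neg_apply, neg_sub]
  · simp only [RId_apply, inner_sub_left, real_inner_smul_left]
    ring
  · rw [RId_apply, RId_apply, RId_apply, real_inner_comm x z, real_inner_comm x y,
      real_inner_comm y z]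
    abel

-- `⟪R x y y, x⟫` is the sectional curvature of the plane spanned by `x` and `y`, up to the
-- factor `⟪x, x⟫ * ⟪y, y⟫ - ⟪x, y⟫ ^ 2`.

namespace IsAlgCurvature

variable {R S : V →ₗ[ℝ] V →ₗ[ℝ] V →ₗ[ℝ] V}

theorem sub (hR : IsAlgCurvature R) (hS : IsAlgCurvature S) : IsAlgCurvature (R - S) := by
  refine ⟨fun x y => ?_, fun x y z w => ?_, fun x y z => ?_⟩
  · simp only [LinearMap.sub_apply, hR.1 x y, hS.1 x y, neg_sub_neg, neg_sub]
  · simp only [LinearMap.sub_apply, inner_sub_left, hR.2.1 x y z w, hS.2.1 x y z w]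
    ring
  · have := congrArg₂ (· - ·) (hR.2.2 x y z) (hS.2.2 x y z)
    simp only [LinearMap.sub_apply, sub_zero] at this ⊢
    rw [← this]
    abel

theorem smul (c : ℝ) (hR : IsAlgCurvature R) : IsAlgCurvature (c • R) := by
  refine ⟨fun x y => ?_, fun x y z w => ?_, fun x y z => ?_⟩
  · simp only [LinearMap.smul_apply, hR.1 x y, smul_neg]
  · simp only [LinearMap.smul_apply, real_inner_smul_left, hR.2.1 x y z w, mul_neg]
  · simp only [LinearMap.smul_apply, ← smul_add, hR.2.2 x y z, smul_zero]

theorem apply_self (hR : IsAlgCurvature R) (x : V) : R x x = 0 := by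
  have := hR.1 x x
  rwa [eq_neg_iff_add_eq_zero, ← two_smul ℝ, smul_eq_zero, or_iff_right two_ne_zero] at this

theorem inner_apply_self (hR : IsAlgCurvature R) (x y z : V) : ⟪R x y z, z⟫ = 0 := by
  linarith [hR.2.1 x y z z]

theorem inner_apply_pair_symm (hR : IsAlgCurvature R) (x y z w : V) :
    ⟪R x y z, w⟫ = ⟪R z w x, y⟫ := by
  have hB (x y z w : V) : ⟪R x y z, w⟫ + ⟪R y z x, w⟫ + ⟪R z x y, w⟫ = 0 := by
    rw [← inner_add_left, ← inner_add_left, hR.2.2, inner_zero_left]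
  have h₁ (x y z w : V) : ⟪R x y z, w⟫ = -⟪R y x z, w⟫ := by
    rw [hR.1 x y, LinearMap.neg_apply, inner_neg_left]
  have h₂ := hR.2.1
  -- the Bianchi identity at the four cyclic permutations of `(x, y, z, w)`, and antisymmetries
  linarith [hB x y z w, hB y z w x, hB z w x y, hB w x y z, h₁ z x y w, h₂ y z w x, h₂ z w y x,
    h₁ w y z x, h₂ y w z x, h₁ w x z y, h₂ x w z y, h₂ x z w y, h₁ w x y z, h₂ x y w z]

theorem eq_zero_of_sectional_eq_zero (hR : IsAlgCurvature R) (h : ∀ x y, ⟪R x y y, x⟫ = 0) :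
    R = 0 := by
  have hJ (x y : V) : R x y y = 0 := by
    refine ext_inner_right ℝ fun w => ?_
    have hsym : ⟪R w y y, x⟫ = ⟪R x y y, w⟫ := by
      rw [hR.2.1, hR.inner_apply_pair_symm, ← hR.2.1]
    have := h (x + w) y
    simp only [map_add, LinearMap.add_apply, inner_add_left, inner_add_right, h, hsym] at this
    rw [inner_zero_left]
    linarith
  have hJ' (x y z : V) : R x y z = -R x z y := by
    have := hJ x (y + z)
    simp only [map_add, LinearMap.add_apply, hJ, zero_add, add_zero] at this
    exact eq_neg_of_add_eq_zero_right this
  ext x y z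
  have h₁ : R y z x = R x y z := by
    rw [hJ' y z x, hR.1 y x, LinearMap.neg_apply, neg_neg]
  have h₂ : R z x y = R x y z := by
    rw [hR.1 z x, LinearMap.neg_apply, ← hJ']
  have h₃ : (3 : ℝ) • R x y z = 0 := by
    rw [← hR.2.2 x y z, h₁, h₂]
    module
  simpa using h₃

theorem sectional_eq_zero_of_orthonormal (hR : IsAlgCurvature R)
    (h : ∀ a b : V, ⟪a, a⟫ = 1 → ⟪b, b⟫ = 1 → ⟪a, b⟫ = 0 → ⟪R a b b, a⟫ = 0) (x y : V) :
    ⟪R x y y, x⟫ = 0 := by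
  have h_orth {x y : V} (hxy : ⟪x, y⟫ = 0) : ⟪R x y y, x⟫ = 0 := by
    rcases eq_or_ne x 0 with rfl | hx
    · simp
    rcases eq_or_ne y 0 with rfl | hy
    · simp
    have hunit {v : V} (hv : v ≠ 0) : ⟪‖v‖⁻¹ • v, ‖v‖⁻¹ • v⟫ = 1 := by
      rw [real_inner_self_eq_norm_sq, norm_smul, norm_inv, norm_norm,
        inv_mul_cancel₀ (norm_ne_zero_iff.2 hv), one_pow]
    have := h _ _ (hunit hx) (hunit hy)
      (by rw [real_inner_smul_left, real_inner_smul_right, hxy, mul_zero, mul_zero])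
    simp only [map_smul, LinearMap.smul_apply, real_inner_smul_left, real_inner_smul_right] at this
    simpa [hx, hy] using this
  -- `⟪R x y y, x⟫` is unchanged when a multiple of `x` is subtracted from `y`.
  set y' := y - (⟪x, y⟫ / ⟪x, x⟫) • x
  have hxy' : ⟪x, y'⟫ = 0 := by
    rw [inner_sub_right, real_inner_smul_right, div_mul_cancel_of_imp, sub_self]
    intro hx
    rw [inner_self_eq_zero.1 hx, inner_zero_left]
  have : ⟪R x y y, x⟫ = ⟪R x y' y', x⟫ := by
    simp [y', hR.apply_self, inner_sub_left, real_inner_smul_left, hR.inner_apply_self]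
  rw [this, h_orth hxy']

theorem eq_smul_RId_of_sectional_eq (hR : IsAlgCurvature R) (c : ℝ)
    (h : ∀ a b : V, ⟪a, a⟫ = 1 → ⟪b, b⟫ = 1 → ⟪a, b⟫ = 0 → ⟪R a b b, a⟫ = c) :
    R = c • RId := by
  have hS := hR.sub (isAlgCurvature_RId.smul c)
  rw [← sub_eq_zero]
  refine hS.eq_zero_of_sectional_eq_zero
    (hS.sectional_eq_zero_of_orthonormal fun a b ha hb hab => ?_)
  simp only [LinearMap.sub_apply, LinearMap.smul_apply, RId_apply, smul_sub, inner_sub_left,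
    real_inner_smul_left, h a b ha hb hab, ha, hb, hab, real_inner_comm a b]
  ring

end IsAlgCurvature

/-- On a 7-dimensional real inner product space with a 2-fold VCP `χ`, every
algebraic curvature operator invariant under the stabilizer `G₂` of `χ` (inside the
linear isometries of `V`) is a scalar multiple of `R^Id`: the space of
`G₂`-invariant algebraic curvature operators has dimension 1. -/
theorem g2_invariant_curvature {V : Type*} [NormedAddCommGroup V]
    [InnerProductSpace ℝ V] [FiniteDimensional ℝ V] (h7 : Module.finrank ℝ V = 7)
    (χ : AlternatingMap ℝ V V (Fin 2)) (hχ : IsVCP χ)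
    (R : V →ₗ[ℝ] V →ₗ[ℝ] V →ₗ[ℝ] V) (hR : IsAlgCurvature R)
    (hinv : ∀ γ : V ≃ₗᵢ[ℝ] V, (∀ x y : V, γ (χ ![x, y]) = χ ![γ x, γ y]) →
      ∀ x y z : V, R (γ x) (γ y) (γ z) = γ (R x y z)) :
    ∃ c : ℝ, R = c • RId := by
  let e := (stdOrthonormalBasis ℝ V).reindex (finCongr h7)
  have he (i j : Fin 7) : ⟪e i, e j⟫ = if i = j then 1 else 0 :=
    orthonormal_iff_ite.1 e.orthonormal i j
  refine ⟨⟪R (e 0) (e 1) (e 1), e 0⟫, hR.eq_smul_RId_of_sectional_eq _ fun a b ha hb hab => ?_⟩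
  obtain ⟨γ, hγχ, rfl, rfl⟩ :=
    hχ.exists_linearIsometryEquiv_map_orthonormal_pair h7 (he 0 0) (he 1 1) (he 0 1) ha hb hab
  rw [hinv γ hγχ, LinearIsometryEquiv.inner_map_map]
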